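/- Let k be an algebraically closed field of characteristic 2 and let a, b, c, d ∈ k with a ≠ 0 and b ≠ 0. Set F = b y⁴ + d z⁴ + y² z² + x z³ + (b + b²c³) x² z² + a x² y² + a x³ z + (a b²c³ + a² d) x⁴ ∈ k[x, y, z]. Then the set of points (x₀ : y₀ : z₀) ∈ P²(k) at which F, ∂F/∂x, ∂F/∂y and ∂F/∂z all vanish is exactly the singleton {(1 : a^{1/4} : a^{1/2})}. -/
import Mathlib


open MvPolynomial

/-- The quartic `b y⁴ + d z⁴ + y² z² + x z³ + (b + b²c³) x² z² + a x² y² + a x³ z +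
(a b²c³ + a² d) x⁴`, with `x = X 0`, `y = X 1`, `z = X 2`. -/
noncomputable def quarticIII (k : Type*) [Field k] (a b c d : k) : MvPolynomial (Fin 3) k :=
  C b * (X 1) ^ 4 + C d * (X 2) ^ 4 + (X 1) ^ 2 * (X 2) ^ 2 + (X 0) * (X 2) ^ 3 +
    C (b + b ^ 2 * c ^ 3) * (X 0) ^ 2 * (X 2) ^ 2 + C a * (X 0) ^ 2 * (X 1) ^ 2 +
    C a * (X 0) ^ 3 * (X 2) + C (a * b ^ 2 * c ^ 3 + a ^ 2 * d) * (X 0) ^ 4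

lemma quarticIII_eval (k : Type*) [Field k] (a b c d x y z : k) :
    eval ![x,y,z] (quarticIII k a b c d) =
      b*y^4 + d*z^4 + y^2*z^2 + x*z^3 + (b+b^2*c^3)*x^2*z^2 + a*x^2*y^2 + a*x^3*z
        + (a*b^2*c^3+a^2*d)*x^4 := by
  simp [quarticIII]

lemma quarticIII_pderiv0 (k : Type*) [Field k] (a b c d x y z : k) :
    eval ![x,y,z] (pderiv 0 (quarticIII k a b c d)) =
      z^3 + 2*(b+b^2*c^3)*x*z^2 + 2*a*x*y^2 + 3*a*x^2*z + 4*(a*b^2*c^3+a^2*d)*x^3 := by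
  simp [quarticIII, pderiv_mul, pderiv_pow, pderiv_X, pderiv_C]
  ring

lemma quarticIII_pderiv1 (k : Type*) [Field k] (a b c d x y z : k) :
    eval ![x,y,z] (pderiv 1 (quarticIII k a b c d)) =
      4*b*y^3 + 2*y*z^2 + 2*a*x^2*y := by
  simp [quarticIII, pderiv_mul, pderiv_pow, pderiv_X, pderiv_C]
  ring

lemma quarticIII_pderiv2 (k : Type*) [Field k] (a b c d x y z : k) :
    eval ![x,y,z] (pderiv 2 (quarticIII k a b c d)) =
      4*d*z^3 + 2*y^2*z + 3*x*z^2 + 2*(b+b^2*c^3)*x^2*z + a*x^3 := by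
  simp [quarticIII, pderiv_mul, pderiv_pow, pderiv_X, pderiv_C]
  ring

/-- Over an algebraically closed field of characteristic 2, with `a ≠ 0` and `b ≠ 0`, the
common vanishing locus in `P²(k)` of the above quartic and all its partials is exactly the
single projective point `(1 : a^{1/4} : a^{1/2})`. -/
theorem stmt_15 (k : Type*) [Field k] [IsAlgClosed k] [CharP k 2] (a b c d : k)
    (ha : a ≠ 0) (hb : b ≠ 0) (β γ : k) (hγ : γ ^ 2 = a) (hβ : β ^ 4 = a) :
    ∀ x₀ y₀ z₀ : k, (x₀, y₀, z₀) ≠ (0, 0, 0) →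
      ((eval ![x₀, y₀, z₀] (quarticIII k a b c d) = 0 ∧
        ∀ i : Fin 3, eval ![x₀, y₀, z₀] (pderiv i (quarticIII k a b c d)) = 0) ↔
        ∃ lam : k, lam ≠ 0 ∧ x₀ = lam ∧ y₀ = lam * β ∧ z₀ = lam * γ) := by
  have h2 : (2 : k) = 0 := CharTwo.two_eq_zero
  intro x₀ y₀ z₀ hne
  constructor
  · rintro ⟨hF, hD⟩
    rw [quarticIII_eval] at hF
    have hp0 := hD 0; rw [quarticIII_pderiv0] at hp0
    have hp2 := hD 2; rw [quarticIII_pderiv2] at hp2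
    have hz0 : z₀ * (z₀^2 + a*x₀^2) = 0 := by
      linear_combination hp0 - ((b+b^2*c^3)*x₀*z₀^2 + a*x₀*y₀^2 + a*x₀^2*z₀
        + 2*(a*b^2*c^3+a^2*d)*x₀^3) * h2
    have hx0 : x₀ * (z₀^2 + a*x₀^2) = 0 := by
      linear_combination hp2 - (2*d*z₀^3 + y₀^2*z₀ + (b+b^2*c^3)*x₀^2*z₀ + x₀*z₀^2) * h2
    have hx : x₀ ≠ 0 := by
      intro hx
      subst hx
      have hz : z₀ = 0 := by
        have : z₀ ^ 3 = 0 := by linear_combination hz0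
        exact pow_eq_zero_iff (by norm_num) |>.mp this
      subst hz
      have hy : y₀ = 0 := by
        have : b * y₀ ^ 4 = 0 := by linear_combination hF
        have := (mul_eq_zero.mp this).resolve_left hb
        exact pow_eq_zero_iff (by norm_num) |>.mp this
      exact hne (by simp [hy])
    have hzz : z₀^2 + a*x₀^2 = 0 := (mul_eq_zero.mp hx0).resolve_left hx
    have hz : z₀ = γ * x₀ := by
      have hsq : (z₀ - γ*x₀)^2 = 0 := by
        linear_combination hzz + x₀^2 * hγ - γ*x₀*z₀ * h2
      exact sub_eq_zero.mp (pow_eq_zero_iff (n := 2) (by norm_num) |>.mp hsq)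
    have hy : y₀ = β * x₀ := by
      have hsq : b * (y₀ - β*x₀)^4 = 0 := by
        rw [hz] at hF
        linear_combination hF
          + (x₀^2*y₀^2 + x₀^4*γ + d*x₀^4*γ^2 - b*x₀^4 + b^2*c^3*x₀^4 + a*d*x₀^4) * hγ
          + (b*x₀^4) * hβ
          + (-x₀^2*y₀^2*γ^2 - x₀^4*γ^3 - d*x₀^4*γ^4 - 2*b*x₀*y₀^3*β + 3*b*x₀^2*y₀^2*β^2
              - 2*b*x₀^3*y₀*β^3 - b^2*c^3*x₀^4*γ^2) * h2
      have h4 := (mul_eq_zero.mp hsq).resolve_left hb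
      exact sub_eq_zero.mp (pow_eq_zero_iff (n := 4) (by norm_num) |>.mp h4)
    exact ⟨x₀, hx, rfl, by rw [hy]; ring, by rw [hz]; ring⟩
  · rintro ⟨lam, hlam, hx, hy, hz⟩
    subst hx hy hz
    set lam := x₀ with hl
    constructor
    · rw [quarticIII_eval]
      linear_combination
        (-γ*lam^4 - β^2*lam^4 - d*γ^2*lam^4 - b*lam^4 - b^2*c^3*lam^4 - a*d*lam^4) * hγ
          + (b*lam^4) * hβ
          + (γ^3*lam^4 + β^2*γ^2*lam^4 + d*γ^4*lam^4 + b*γ^2*lam^4 + b^2*c^3*γ^2*lam^4) * h2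
    · intro i
      fin_cases i
      · show (eval ![lam, lam * β, lam * γ]) (pderiv (0 : Fin 3) (quarticIII k a b c d)) = 0
        rw [quarticIII_pderiv0]
        linear_combination
          (-3*γ*lam^3 - 2*β^2*lam^3 - 4*d*γ^2*lam^3 - 4*b^2*c^3*lam^3 - 4*a*d*lam^3) * hγ
            + (2*γ^3*lam^3 + β^2*γ^2*lam^3 + 2*d*γ^4*lam^3 + b*γ^2*lam^3
                + 3*b^2*c^3*γ^2*lam^3) * h2
      · show (eval ![lam, lam * β, lam * γ]) (pderiv (1 : Fin 3) (quarticIII k a b c d)) = 0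
        rw [quarticIII_pderiv1]
        linear_combination (-2*β*lam^3) * hγ + (2*β*γ^2*lam^3 + 2*b*β^3*lam^3) * h2
      · show (eval ![lam, lam * β, lam * γ]) (pderiv (2 : Fin 3) (quarticIII k a b c d)) = 0
        rw [quarticIII_pderiv2]
        linear_combination (-lam^3) * hγ
          + (2*γ^2*lam^3 + β^2*γ*lam^3 + 2*d*γ^3*lam^3 + b*γ*lam^3 + b^2*c^3*γ*lam^3) * h2
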